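/- Let Ω ⊆ ℝ³ be a bounded open set, b a boundary point of Ω satisfying the exterior Lipschitz graph condition at b, and B ⊆ ℝ³ a bounded open set with closure(Ω) ⊆ B. Let μ denote the 2-dimensional Hausdorff measure on ℝ³ restricted to the topological boundary ∂Ω. Assume the trace inequality: there exists K₀ > 0 such that for every ε ∈ (0,1) and every x ∈ Ω, ∫_{∂Ω} ‖z − x‖⁻⁴ dμ(z) ≤ K₀ ( ε · ∫_{B ∖ closure(Ω)} ‖z − x‖⁻⁶ dz + ε⁻¹ · ∫_{B ∖ closure(Ω)} ‖z − x‖⁻⁴ dz ). Then there exist constants C₂ > 0 and ε₀ > 0 such that for every x ∈ Ω with ‖x − b‖ < ε₀, ∫_{∂Ω} ‖z − x‖⁻⁴ dμ(z) ≤ C₂ · √(‖x − b‖) · ∫_{ℝ³ ∖ closure(Ω)} ‖z − x‖⁻⁶ dz. (Estimate (B.5) of Lemma B.2, with the trace theorem input stated as a hypothesis; note that for G(z) = 1/(4π‖z‖) one has ‖∇G(z − x)‖² = (16π²)⁻¹ ‖z − x‖⁻⁴ and the squared Frobenius norm of the Hessian is ‖∇²G(z − x)‖² = 3/(8π²) ·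 ‖z − x‖⁻⁶, so this is the estimate ‖∇G(·−x)‖²_{L²(∂Ω)} ≤ C √(‖x−b‖) ‖∇²G(·−x)‖²_{L²(ℝ³∖closure(Ω))}.) -/

import Mathlib

/-!
Write `r = ‖x - b‖` and let `ext` be the complement of `closure Ω`. The Lipschitz graph condition
gives an exterior corkscrew: a ball of radius `κ r` inside `ball b r ∩ ext`. On it `‖z - x‖ < 2 r`,
so `∫_ext ‖z - x‖⁻⁶ ≳ r⁻³`. Split `∫_ext ‖z - x‖⁻⁴` at radius `r` around `x`: the near part is at
most `r² ∫_ext ‖z - x‖⁻⁶`, and the far part at most `∫_{‖z - x‖ ≥ r} ‖z - x‖⁻⁴ ≲ r⁻¹`, which by the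
corkscrew bound is again `≲ r² ∫_ext ‖z - x‖⁻⁶`. The trace inequality with `ε = r` then bounds the
boundary integral by `r ∫_ext ‖z - x‖⁻⁶ ≤ √r ∫_ext ‖z - x‖⁻⁶`.
-/

open MeasureTheory Filter
open scoped ENNReal Topology

noncomputable section

/-- The identification of `ℝ² × ℝ` with `ℝ³`: `(s, t) ↦ (s₁, s₂, t)`. -/
def emb (s : EuclideanSpace ℝ (Fin 2)) (t : ℝ) : EuclideanSpace ℝ (Fin 3) :=
  (EuclideanSpace.equiv (Fin 3) ℝ).symm ![s 0, s 1, t]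

/-- The exterior Lipschitz graph condition at a boundary point `b` of `Ω ⊆ ℝ³`. -/
def ExtLipschitzGraphCond (Ω : Set (EuclideanSpace ℝ (Fin 3)))
    (b : EuclideanSpace ℝ (Fin 3)) : Prop :=
  ∃ δ > (0 : ℝ), ∃ A : EuclideanSpace ℝ (Fin 3) ≃ₗᵢ[ℝ] EuclideanSpace ℝ (Fin 3),
    ∃ φ : EuclideanSpace ℝ (Fin 2) → ℝ, ∃ L : NNReal, LipschitzWith L φ ∧ φ 0 = 0 ∧
      ∀ (s : EuclideanSpace ℝ (Fin 2)) (t : ℝ), φ s < t → ‖s‖ ^ 2 + t ^ 2 < δ ^ 2 →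
        b + A (emb s t) ∈ (closure Ω)ᶜ

open Metric Set Module

section InversePowerIntegrals

variable {E : Type*} [NormedAddCommGroup E] [MeasurableSpace E] [OpensMeasurableSpace E]
  (μ : Measure E)

theorem setLIntegral_inter_ball_inv_norm_sub_pow_le {U : Set E} {x : E} (hxU : x ∉ U) (r : ℝ)
    {p q : ℕ} (hpq : p ≤ q) :
    ∫⁻ z in U ∩ ball x r, ENNReal.ofReal (1 / ‖z - x‖ ^ p) ∂μ ≤
      ENNReal.ofReal (r ^ (q - p)) * ∫⁻ z in U, ENNReal.ofReal (1 / ‖z - x‖ ^ q) ∂μ := by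
  have hpt : ∀ z ∈ U ∩ ball x r, ENNReal.ofReal (1 / ‖z - x‖ ^ p) ≤
      ENNReal.ofReal (r ^ (q - p)) * ENNReal.ofReal (1 / ‖z - x‖ ^ q) := by
    rintro z ⟨hzU, hzr⟩
    have hzx : 0 < ‖z - x‖ := norm_pos_iff.2 (sub_ne_zero.2 (ne_of_mem_of_not_mem hzU hxU))
    have hzr' : ‖z - x‖ < r := by rwa [mem_ball, dist_eq_norm] at hzr
    have hr : 0 < r := hzx.trans hzr'
    rw [← ENNReal.ofReal_mul (by positivity)]
    gcongr
    rw [mul_one_div, div_le_div_iff₀ (by positivity) (by positivity), one_mul,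
      ← Nat.sub_add_cancel hpq, pow_add, Nat.add_sub_cancel]
    gcongr
  calc ∫⁻ z in U ∩ ball x r, ENNReal.ofReal (1 / ‖z - x‖ ^ p) ∂μ
      ≤ ∫⁻ z in U ∩ ball x r, ENNReal.ofReal (r ^ (q - p)) *
          ENNReal.ofReal (1 / ‖z - x‖ ^ q) ∂μ := by
        have : Measurable fun z : E => ‖z - x‖ :=
          (continuous_id.sub continuous_const).norm.measurable
        exact setLIntegral_mono (by fun_prop) hpt
    _ ≤ ∫⁻ z in U, ENNReal.ofReal (r ^ (q - p)) * ENNReal.ofReal (1 / ‖z - x‖ ^ q) ∂μ :=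
        lintegral_mono_set inter_subset_left
    _ = _ := lintegral_const_mul' _ _ ENNReal.ofReal_ne_top

theorem ofReal_inv_pow_mul_measure_ball_le_setLIntegral {U : Set E} {x z₀ : E} (hxU : x ∉ U)
    {ρ R : ℝ} (hball : ball z₀ ρ ⊆ ball x R ∩ U) (q : ℕ) :
    ENNReal.ofReal (1 / R ^ q) * μ (ball z₀ ρ) ≤
      ∫⁻ z in U, ENNReal.ofReal (1 / ‖z - x‖ ^ q) ∂μ := by
  have hpt : ∀ z ∈ ball z₀ ρ, ENNReal.ofReal (1 / R ^ q) ≤ ENNReal.ofReal (1 / ‖z - x‖ ^ q) := by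
    intro z hz
    obtain ⟨hzR, hzU⟩ := hball hz
    have hzx : 0 < ‖z - x‖ := norm_pos_iff.2 (sub_ne_zero.2 (ne_of_mem_of_not_mem hzU hxU))
    rw [mem_ball, dist_eq_norm] at hzR
    gcongr
  calc ENNReal.ofReal (1 / R ^ q) * μ (ball z₀ ρ)
      = ∫⁻ _ in ball z₀ ρ, ENNReal.ofReal (1 / R ^ q) ∂μ := (setLIntegral_const _ _).symm
    _ ≤ ∫⁻ z in ball z₀ ρ, ENNReal.ofReal (1 / ‖z - x‖ ^ q) ∂μ :=
        setLIntegral_mono' measurableSet_ball hpt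
    _ ≤ _ := lintegral_mono_set (fun z hz => (hball hz).2)

end InversePowerIntegrals

section HaarMeasure

variable {E : Type*} [NormedAddCommGroup E] [NormedSpace ℝ E] [FiniteDimensional ℝ E]
  [MeasurableSpace E] [BorelSpace E] (μ : Measure E) [μ.IsAddHaarMeasure]

theorem lintegral_comp_smul_of_pos (f : E → ℝ≥0∞) {R : ℝ} (hR : 0 < R) :
    ∫⁻ x, f (R • x) ∂μ = ENNReal.ofReal (R ^ finrank ℝ E)⁻¹ * ∫⁻ x, f x ∂μ := by
  have hmap := Measure.map_addHaar_smul μ hR.ne'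
  rw [abs_of_pos (by positivity)] at hmap
  rw [← smul_eq_mul, ← lintegral_smul_measure, ← hmap]
  exact (lintegral_map_equiv f (Homeomorph.smulOfNeZero R hR.ne').toMeasurableEquiv).symm

theorem lintegral_inv_one_add_norm_pow_lt_top {p : ℕ} (hp : finrank ℝ E < p) :
    ∫⁻ y, ENNReal.ofReal (1 / (1 + ‖y‖) ^ p) ∂μ < ∞ := by
  convert finite_integral_one_add_norm (μ := μ) (r := p) (by exact_mod_cast hp) using 4
  rw [Real.rpow_neg (by positivity), Real.rpow_natCast, one_div]

theorem lintegral_inv_add_norm_sub_pow (p : ℕ) (x : E) {r : ℝ} (hr : 0 < r) :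
    ∫⁻ z, ENNReal.ofReal (1 / (r + ‖z - x‖) ^ p) ∂μ =
      ENNReal.ofReal (r ^ finrank ℝ E / r ^ p) *
        ∫⁻ y, ENNReal.ofReal (1 / (1 + ‖y‖) ^ p) ∂μ := by
  have hscale : ∀ y : E, 1 / (r + ‖y‖) ^ p = 1 / r ^ p * (1 / (1 + ‖r⁻¹ • y‖) ^ p) := by
    intro y
    rw [norm_smul, Real.norm_of_nonneg (inv_nonneg.2 hr.le)]
    field_simp
    rw [← mul_pow, mul_div_cancel₀ _ hr.ne']
  simp_rw [lintegral_sub_right_eq_self (μ := μ) (fun y => ENNReal.ofReal (1 / (r + ‖y‖) ^ p)) x,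
    hscale, ENNReal.ofReal_mul (by positivity : (0 : ℝ) ≤ 1 / r ^ p)]
  rw [lintegral_const_mul' _ _ ENNReal.ofReal_ne_top,
    lintegral_comp_smul_of_pos μ (fun y => ENNReal.ofReal (1 / (1 + ‖y‖) ^ p)) (inv_pos.2 hr),
    ← mul_assoc, ← ENNReal.ofReal_mul (by positivity), inv_pow, inv_inv]
  congr 2
  ring

theorem setLIntegral_compl_ball_inv_norm_sub_pow_le (p : ℕ) (x : E) {r : ℝ} (hr : 0 < r) :
    ∫⁻ z in (ball x r)ᶜ, ENNReal.ofReal (1 / ‖z - x‖ ^ p) ∂μ ≤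
      ENNReal.ofReal (2 ^ p * r ^ finrank ℝ E / r ^ p) *
        ∫⁻ y, ENNReal.ofReal (1 / (1 + ‖y‖) ^ p) ∂μ := by
  -- on the complement of the ball, `r + ‖z - x‖ ≤ 2 ‖z - x‖`
  have hpt : ∀ z ∈ (ball x r)ᶜ, ENNReal.ofReal (1 / ‖z - x‖ ^ p) ≤
      ENNReal.ofReal (2 ^ p) * ENNReal.ofReal (1 / (r + ‖z - x‖) ^ p) := by
    intro z hz
    have hrz : r ≤ ‖z - x‖ := by simpa [dist_eq_norm] using hz
    have hzx : 0 < ‖z - x‖ := hr.trans_le hrz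
    rw [← ENNReal.ofReal_mul (by positivity)]
    gcongr
    rw [mul_one_div, div_le_div_iff₀ (by positivity) (by positivity), one_mul, ← mul_pow]
    gcongr
    linarith
  calc ∫⁻ z in (ball x r)ᶜ, ENNReal.ofReal (1 / ‖z - x‖ ^ p) ∂μ
      ≤ ∫⁻ z in (ball x r)ᶜ, ENNReal.ofReal (2 ^ p) *
          ENNReal.ofReal (1 / (r + ‖z - x‖) ^ p) ∂μ := setLIntegral_mono (by fun_prop) hpt
    _ ≤ ∫⁻ z, ENNReal.ofReal (2 ^ p) * ENNReal.ofReal (1 / (r + ‖z - x‖) ^ p) ∂μ :=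
        setLIntegral_le_lintegral _ _
    _ = _ := by
        rw [lintegral_const_mul' _ _ ENNReal.ofReal_ne_top, lintegral_inv_add_norm_sub_pow μ p x hr,
          ← mul_assoc, ← ENNReal.ofReal_mul (by positivity), mul_div_assoc]

theorem exists_setLIntegral_inv_norm_sub_pow_le {κ : ℝ} (hκ : 0 < κ) {p q : ℕ}
    (hp : finrank ℝ E < p) (hpq : p ≤ q) :
    ∃ C > 0, ∀ (U : Set E) (x z₀ : E) (r : ℝ), x ∉ U → 0 < r → ball z₀ (κ * r) ⊆ ball x r ∩ U →
      ∫⁻ z in U, ENNReal.ofReal (1 / ‖z - x‖ ^ p) ∂μ ≤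
        ENNReal.ofReal (C * r ^ (q - p)) * ∫⁻ z in U, ENNReal.ofReal (1 / ‖z - x‖ ^ q) ∂μ := by
  obtain ⟨k, rfl⟩ := Nat.exists_eq_add_of_le hpq
  rw [Nat.add_sub_cancel_left]
  set n := finrank ℝ E
  set M := ∫⁻ y, ENNReal.ofReal (1 / (1 + ‖y‖) ^ p) ∂μ
  have hM : M ≠ ∞ := (lintegral_inv_one_add_norm_pow_lt_top μ hp).ne
  set v := μ (ball 0 1)
  have hv : 0 < v.toReal :=
    ENNReal.toReal_pos (measure_ball_pos μ 0 one_pos).ne' measure_ball_lt_top.ne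
  set C₀ := 2 ^ p * M.toReal / (κ ^ n * v.toReal)
  refine ⟨1 + C₀, by positivity, fun U x z₀ r hxU hr hball => ?_⟩
  set J := ∫⁻ z in U, ENNReal.ofReal (1 / ‖z - x‖ ^ (p + k)) ∂μ
  have hlow : ENNReal.ofReal (κ ^ n * v.toReal * r ^ n / r ^ (p + k)) ≤ J := by
    refine le_trans (le_of_eq ?_)
      (ofReal_inv_pow_mul_measure_ball_le_setLIntegral μ hxU hball (p + k))
    rw [Measure.addHaar_ball_of_pos μ z₀ (by positivity), ← ENNReal.ofReal_toReal
      (measure_ball_lt_top (μ := μ) (x := 0) (r := 1)).ne, ← ENNReal.ofReal_mul (by positivity),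
      ← ENNReal.ofReal_mul (by positivity)]
    congr 1
    rw [mul_pow]
    ring
  -- the far part sees nothing of `U`; it is compared with `J` through the ball inside `U`
  have hfar : ∫⁻ z in (ball x r)ᶜ, ENNReal.ofReal (1 / ‖z - x‖ ^ p) ∂μ ≤
      ENNReal.ofReal (C₀ * r ^ k) * J :=
    calc ∫⁻ z in (ball x r)ᶜ, ENNReal.ofReal (1 / ‖z - x‖ ^ p) ∂μ
        ≤ ENNReal.ofReal (2 ^ p * r ^ n / r ^ p) * M :=
          setLIntegral_compl_ball_inv_norm_sub_pow_le μ p x hr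
      _ = ENNReal.ofReal (C₀ * r ^ k) *
            ENNReal.ofReal (κ ^ n * v.toReal * r ^ n / r ^ (p + k)) := by
          rw [← ENNReal.ofReal_toReal hM, ← ENNReal.ofReal_mul (by positivity),
            ← ENNReal.ofReal_mul (by positivity)]
          congr 1
          simp only [C₀, pow_add]
          field_simp
      _ ≤ ENNReal.ofReal (C₀ * r ^ k) * J := by gcongr
  have hsplit : U ⊆ (U ∩ ball x r) ∪ (ball x r)ᶜ := fun z hz => by
    by_cases hzr : z ∈ ball x r
    exacts [Or.inl ⟨hz, hzr⟩, Or.inr hzr]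
  calc ∫⁻ z in U, ENNReal.ofReal (1 / ‖z - x‖ ^ p) ∂μ
      ≤ ∫⁻ z in (U ∩ ball x r) ∪ (ball x r)ᶜ, ENNReal.ofReal (1 / ‖z - x‖ ^ p) ∂μ :=
        lintegral_mono_set hsplit
    _ ≤ ∫⁻ z in U ∩ ball x r, ENNReal.ofReal (1 / ‖z - x‖ ^ p) ∂μ +
          ∫⁻ z in (ball x r)ᶜ, ENNReal.ofReal (1 / ‖z - x‖ ^ p) ∂μ := lintegral_union_le _ _ _
    _ ≤ ENNReal.ofReal (r ^ k) * J + ENNReal.ofReal (C₀ * r ^ k) * J := by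
        gcongr
        simpa only [Nat.add_sub_cancel_left] using
          setLIntegral_inter_ball_inv_norm_sub_pow_le μ hxU r (Nat.le_add_right p k)
    _ = ENNReal.ofReal ((1 + C₀) * r ^ k) * J := by
        rw [← add_mul, ← ENNReal.ofReal_add (by positivity) (by positivity), add_mul, one_mul]

end HaarMeasure

/-- The exterior corkscrew condition (Jerison–Kenig) at `b`. -/
def HasExteriorCorkscrew {X : Type*} [PseudoMetricSpace X] (Ω : Set X) (b : X) : Prop :=
  ∃ κ > (0 : ℝ), ∃ δ > (0 : ℝ), ∀ r ∈ Ioo 0 δ, ∃ z₀, ball z₀ (κ * r) ⊆ ball b r ∩ (closure Ω)ᶜ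

theorem norm_emb_sq (s : EuclideanSpace ℝ (Fin 2)) (t : ℝ) : ‖emb s t‖ ^ 2 = ‖s‖ ^ 2 + t ^ 2 := by
  rw [EuclideanSpace.norm_eq, EuclideanSpace.norm_eq, Real.sq_sqrt (by positivity),
    Real.sq_sqrt (by positivity)]
  simp [emb, Fin.sum_univ_three, Fin.sum_univ_two]

theorem emb_sub_emb (s s' : EuclideanSpace ℝ (Fin 2)) (t t' : ℝ) :
    emb s t - emb s' t' = emb (s - s') (t - t') := by
  ext i; fin_cases i <;> rfl

theorem exists_emb_eq (w : EuclideanSpace ℝ (Fin 3)) : ∃ s t, emb s t = w :=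
  ⟨!₂[w 0, w 1], w 2, by ext i; fin_cases i <;> rfl⟩

theorem LipschitzWith.apply_lt_and_sq_add_sq_lt {φ : EuclideanSpace ℝ (Fin 2) → ℝ} {L : NNReal}
    (hφ : LipschitzWith L φ) (hφ0 : φ 0 = 0) {ρ : ℝ} (hρ : 0 ≤ ρ) {s : EuclideanSpace ℝ (Fin 2)}
    {t : ℝ} (hst : ‖s‖ ^ 2 + (t - (L + 1) * ρ) ^ 2 < ρ ^ 2) :
    φ s < t ∧ ‖s‖ ^ 2 + t ^ 2 < ((L + 3) * ρ) ^ 2 := by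
  have hs : ‖s‖ < ρ := by
    simpa using abs_lt_of_sq_lt_sq (a := ‖s‖) (by nlinarith [sq_nonneg (t - (L + 1) * ρ)]) hρ
  have ht := abs_lt.1 <|
    abs_lt_of_sq_lt_sq (a := t - (L + 1) * ρ) (by nlinarith [sq_nonneg ‖s‖]) hρ
  have hφs : φ s ≤ L * ‖s‖ := by
    simpa [hφ0] using (le_abs_self _).trans (hφ.dist_le_mul s 0)
  have hL := L.2
  constructor
  · nlinarith
  · have ht2 : t ^ 2 < ((L + 2) * ρ) ^ 2 :=
      pow_lt_pow_left₀ (by linarith) (by nlinarith) two_ne_zero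
    nlinarith [norm_nonneg s]

theorem ExtLipschitzGraphCond.hasExteriorCorkscrew {Ω : Set (EuclideanSpace ℝ (Fin 3))}
    {b : EuclideanSpace ℝ (Fin 3)} (h : ExtLipschitzGraphCond Ω b) : HasExteriorCorkscrew Ω b := by
  obtain ⟨δ, hδ, A, φ, L, hφ, hφ0, hext⟩ := h
  refine ⟨1 / (L + 3), by positivity, δ, hδ, fun r ⟨hr0, hrδ⟩ => ?_⟩
  set ρ := 1 / (L + 3) * r
  have hρ : (L + 3) * ρ = r := by simp only [ρ]; field_simp
  refine ⟨b + A (emb 0 ((L + 1) * ρ)), fun z hz => ?_⟩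
  obtain ⟨s, t, hst⟩ := exists_emb_eq (A.symm (z - b))
  obtain rfl : z = b + A (emb s t) := by rw [hst, A.apply_symm_apply]; abel
  rw [mem_ball, dist_eq_norm, add_sub_add_left_eq_sub, ← map_sub, A.norm_map, emb_sub_emb,
    sub_zero] at hz
  obtain ⟨hφst, hnorm⟩ := hφ.apply_lt_and_sq_add_sq_lt hφ0 (by positivity)
    (norm_emb_sq s _ ▸ pow_lt_pow_left₀ hz (norm_nonneg _) two_ne_zero)
  rw [hρ] at hnorm
  refine ⟨?_, hext s t hφst (hnorm.trans (pow_lt_pow_left₀ hrδ hr0.le two_ne_zero))⟩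
  rw [mem_ball, dist_eq_norm, add_sub_cancel_left, A.norm_map,
    ← sq_lt_sq₀ (norm_nonneg _) hr0.le, norm_emb_sq]
  exact hnorm

theorem estimate_B5_general (Ω : Set (EuclideanSpace ℝ (Fin 3))) (hΩo : IsOpen Ω)
    (b : EuclideanSpace ℝ (Fin 3)) (hb : b ∈ frontier Ω)
    (hcond : ExtLipschitzGraphCond Ω b)
    (B : Set (EuclideanSpace ℝ (Fin 3)))
    (htrace : ∃ K₀ > (0 : ℝ), ∀ ε ∈ Set.Ioo (0 : ℝ) 1, ∀ x ∈ Ω,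
      (∫⁻ z in frontier Ω, ENNReal.ofReal (1 / ‖z - x‖ ^ 4) ∂(μH[2])) ≤
        ENNReal.ofReal K₀ *
          (ENNReal.ofReal ε * (∫⁻ z in B \ closure Ω, ENNReal.ofReal (1 / ‖z - x‖ ^ 6)) +
            ENNReal.ofReal ε⁻¹ * ∫⁻ z in B \ closure Ω, ENNReal.ofReal (1 / ‖z - x‖ ^ 4))) :
    ∃ C₂ > (0 : ℝ), ∃ ε₀ > (0 : ℝ), ∀ x ∈ Ω, ‖x - b‖ < ε₀ →
      (∫⁻ z in frontier Ω, ENNReal.ofReal (1 / ‖z - x‖ ^ 4) ∂(μH[2])) ≤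
        ENNReal.ofReal (C₂ * Real.sqrt ‖x - b‖) *
          ∫⁻ z in (closure Ω)ᶜ, ENNReal.ofReal (1 / ‖z - x‖ ^ 6) := by
  obtain ⟨K₀, hK₀, htr⟩ := htrace
  obtain ⟨κ, hκ, δ, hδ, hcork⟩ := hcond.hasExteriorCorkscrew
  obtain ⟨C, hC, hgrad⟩ := exists_setLIntegral_inv_norm_sub_pow_le
    (volume : Measure (EuclideanSpace ℝ (Fin 3))) (half_pos hκ) (p := 4) (q := 6) (by simp)
    (by norm_num)
  refine ⟨K₀ * (1 + 4 * C), by positivity, min δ 1, by positivity, fun x hx hxb => ?_⟩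
  set r := ‖x - b‖
  have hbΩ : b ∉ Ω := (hΩo.frontier_eq ▸ hb).2
  have hr : 0 < r := norm_pos_iff.2 (sub_ne_zero.2 (ne_of_mem_of_not_mem hx hbΩ))
  obtain ⟨z₀, hz₀⟩ := hcork r ⟨hr, hxb.trans_le (min_le_left _ _)⟩
  have hball : ball z₀ (κ / 2 * (2 * r)) ⊆ ball x (2 * r) ∩ (closure Ω)ᶜ := by
    rw [show κ / 2 * (2 * r) = κ * r by ring]
    refine hz₀.trans (inter_subset_inter_left _ (ball_subset_ball' ?_))
    rw [dist_comm, dist_eq_norm]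
    linarith
  set J := ∫⁻ z in (closure Ω)ᶜ, ENNReal.ofReal (1 / ‖z - x‖ ^ 6)
  have h₄ : ∫⁻ z in B \ closure Ω, ENNReal.ofReal (1 / ‖z - x‖ ^ 4) ≤
      ENNReal.ofReal (4 * C * r ^ 2) * J := by
    rw [show 4 * C * r ^ 2 = C * (2 * r) ^ (6 - 4) by ring]
    exact (lintegral_mono_set fun _ hz => hz.2).trans
      (hgrad _ x z₀ (2 * r) (not_not_intro (subset_closure hx)) (by positivity) hball)
  have h₆ : ∫⁻ z in B \ closure Ω, ENNReal.ofReal (1 / ‖z - x‖ ^ 6) ≤ J :=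
    lintegral_mono_set fun _ hz => hz.2
  calc _ ≤ ENNReal.ofReal K₀ * (ENNReal.ofReal r * J +
          ENNReal.ofReal r⁻¹ * (ENNReal.ofReal (4 * C * r ^ 2) * J)) :=
        (htr r ⟨hr, hxb.trans_le (min_le_right _ _)⟩ x hx).trans (by gcongr)
    _ = ENNReal.ofReal (K₀ * (1 + 4 * C) * r) * J := by
        rw [← mul_assoc (ENNReal.ofReal r⁻¹), ← ENNReal.ofReal_mul (by positivity), ← add_mul,
          ← ENNReal.ofReal_add (by positivity) (by positivity), ← mul_assoc,
          ← ENNReal.ofReal_mul (by positivity)]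
        congr 2
        field_simp
    _ ≤ ENNReal.ofReal (K₀ * (1 + 4 * C) * Real.sqrt r) * J := by
        gcongr
        exact Real.le_sqrt_of_sq_le (by nlinarith [hxb.trans_le (min_le_right δ 1)])

/-- **Estimate (B.5) of Lemma B.2** (with the trace inequality as hypothesis).
For `G(z) = 1/(4π‖z‖)` one has `‖∇G(z−x)‖² = (16π²)⁻¹ ‖z−x‖⁻⁴` and
`‖∇²G(z−x)‖² = 3/(8π²) ‖z−x‖⁻⁶`, so this is the estimate
`‖∇G(·−x)‖²_{L²(∂Ω)} ≤ C₂ √(‖x−b‖) ‖∇²G(·−x)‖²_{L²(ℝ³∖closure Ω)}`. -/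
theorem estimate_B5 (Ω : Set (EuclideanSpace ℝ (Fin 3))) (hΩo : IsOpen Ω)
    (hΩb : Bornology.IsBounded Ω) (b : EuclideanSpace ℝ (Fin 3)) (hb : b ∈ frontier Ω)
    (hcond : ExtLipschitzGraphCond Ω b)
    (B : Set (EuclideanSpace ℝ (Fin 3))) (hBo : IsOpen B) (hBb : Bornology.IsBounded B)
    (hΩB : closure Ω ⊆ B)
    (htrace : ∃ K₀ > (0 : ℝ), ∀ ε ∈ Set.Ioo (0 : ℝ) 1, ∀ x ∈ Ω,
      (∫⁻ z in frontier Ω, ENNReal.ofReal (1 / ‖z - x‖ ^ 4) ∂(μH[2])) ≤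
        ENNReal.ofReal K₀ *
          (ENNReal.ofReal ε * (∫⁻ z in B \ closure Ω, ENNReal.ofReal (1 / ‖z - x‖ ^ 6)) +
            ENNReal.ofReal ε⁻¹ * ∫⁻ z in B \ closure Ω, ENNReal.ofReal (1 / ‖z - x‖ ^ 4))) :
    ∃ C₂ > (0 : ℝ), ∃ ε₀ > (0 : ℝ), ∀ x ∈ Ω, ‖x - b‖ < ε₀ →
      (∫⁻ z in frontier Ω, ENNReal.ofReal (1 / ‖z - x‖ ^ 4) ∂(μH[2])) ≤
        ENNReal.ofReal (C₂ * Real.sqrt ‖x - b‖) *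
          ∫⁻ z in (closure Ω)ᶜ, ENNReal.ofReal (1 / ‖z - x‖ ^ 6) :=
  estimate_B5_general Ω hΩo b hb hcond B htrace
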